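/- arXiv:2304.07284 — 7 statements merged into one kernel-verified Lean document; each statement's English description precedes it below -/
import Mathlib

section
/- Let n > ℓ ≥ 1 be integers and α ∈ (0,1) with αℓ ∈ ℕ. For the Cayley graph C_{n,ℓ,α} on the group (ℤ/nℤ)^ℓ whose random-walk step adds a uniformly random y ∈ [n]^ℓ masked by a uniformly random 0/1 vector b of Hamming weight αℓ, the eigenvalue corresponding to the character χ_T (T ∈ [n]^ℓ) equals C(ℓ−|T|, (1−α)ℓ−|T|)/C(ℓ, (1−α)ℓ) if |T| ≤ (1−α)ℓ, and 0 otherwise, where |T| = #{i : Tᵢ ≠ 0}. -/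
/-!
Integrating the character `χ_T` over a coordinate `i` of the mask `S` gives `n` if `T i = 0` and
`0` otherwise, while an unmasked coordinate just contributes `n`; so each mask contributes
`n ^ ℓ χ_T(x)` or `0` according as `S` lies in the zero set of `T`. The eigenvalue therefore
counts the `t`-subsets of that zero set, `C(ℓ - |T|, t)`, and the stated formula is this count
divided by `C(ℓ, t)`, rewritten by binomial symmetry.
-/

open Finset

lemma ZMod.exp_val_mul_val_eq_stdAddChar (n : ℕ) [NeZero n] (a b : ZMod n) :
    Complex.exp (2 * Real.pi * Complex.I * (a.val : ℂ) * (b.val : ℂ) / n) =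
      ZMod.stdAddChar (a * b) := by
  have hab : (((a.val * b.val : ℕ) : ℤ) : ZMod n) = a * b := by
    push_cast
    rw [ZMod.natCast_zmod_val, ZMod.natCast_zmod_val]
  rw [← hab, ZMod.stdAddChar_coe]
  push_cast
  ring_nf

section

variable {R : Type*} [CommRing R] [Fintype R] [DecidableEq R] {ψ : AddChar R ℂ}

lemma AddChar.sum_apply_mul_add_ite (hψ : ψ.IsPrimitive) (c b : R) (p : Prop) [Decidable p] :
    ∑ a, ψ (c * (b + if p then a else 0)) =
      ψ (c * b) * if p → c = 0 then (Fintype.card R : ℂ) else 0 := by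
  by_cases hp : p
  · simp only [hp, if_true, true_imp_iff, mul_add, AddChar.map_add_eq_mul, ← mul_sum]
    congr 1
    simp_rw [mul_comm c]
    exact_mod_cast AddChar.sum_mulShift c hψ
  · simp [hp, mul_comm]

lemma AddChar.sum_prod_apply_mul_add_ite {ι : Type*} [Fintype ι] [DecidableEq ι]
    (hψ : ψ.IsPrimitive) (T x : ι → R) (S : Finset ι) :
    ∑ y : ι → R, ∏ i, ψ (T i * (x i + if i ∈ S then y i else 0)) =
      (if S ⊆ ({i | T i = 0} : Finset ι) then (Fintype.card R : ℂ) ^ Fintype.card ι else 0) *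
        ∏ i, ψ (T i * x i) := by
  rw [← Fintype.prod_sum fun i a => ψ (T i * (x i + if i ∈ S then a else 0))]
  simp only [AddChar.sum_apply_mul_add_ite hψ, prod_mul_distrib, Fintype.prod_ite_zero,
    prod_const, card_univ, mul_comm, subset_iff, mem_filter, mem_univ, true_and]

end

lemma Finset.filter_subset_powersetCard {α : Type*} [DecidableEq α] (s u : Finset α) (t : ℕ) :
    (powersetCard t s).filter (· ⊆ u) = powersetCard t (s ∩ u) := by
  ext S
  simp only [mem_filter, mem_powersetCard, subset_inter_iff]
  tauto

lemma Nat.cast_choose_sub_eq_choose_mul (ℓ d t : ℕ) (hd : d ≤ ℓ) :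
    ((ℓ - d).choose t : ℝ) =
      ℓ.choose t * if d ≤ ℓ - t then ((ℓ - d).choose (ℓ - t - d) : ℝ) / ℓ.choose (ℓ - t) else 0 := by
  obtain htℓ | hℓt := le_or_gt t ℓ
  · by_cases hdt : d ≤ ℓ - t
    · rw [if_pos hdt, Nat.choose_symm_of_eq_add (by omega : ℓ - d = (ℓ - t - d) + t),
        Nat.choose_symm htℓ, mul_div_cancel₀]
      exact_mod_cast (Nat.choose_pos htℓ).ne'
    · rw [if_neg hdt, mul_zero, Nat.choose_eq_zero_of_lt (by omega), Nat.cast_zero]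
  · rw [Nat.choose_eq_zero_of_lt hℓt, Nat.choose_eq_zero_of_lt (by omega), Nat.cast_zero, zero_mul]

theorem cayley_johnson_eigenvalues_general (n ℓ t : ℕ) [NeZero n]
    (T : Fin ℓ → ZMod n) (x : Fin ℓ → ZMod n) :
    let χ : (Fin ℓ → ZMod n) → ℂ := fun z =>
      ∏ i, Complex.exp (2 * Real.pi * Complex.I * ((T i).val : ℂ) * ((z i).val : ℂ) / (n : ℂ))
    let degT : ℕ := (Finset.univ.filter fun i => T i ≠ 0).card
    let lam : ℝ :=
      if degT ≤ ℓ - t then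
        ((ℓ - degT).choose (ℓ - t - degT) : ℝ) / ((ℓ.choose (ℓ - t)) : ℝ)
      else 0
    (∑ S ∈ Finset.powersetCard t (Finset.univ : Finset (Fin ℓ)),
        ∑ y : Fin ℓ → ZMod n, χ (fun i => x i + if i ∈ S then y i else 0))
      = ((ℓ.choose t : ℂ) * (n : ℂ) ^ ℓ) * (lam : ℂ) * χ x := by
  intro χ degT lam
  have hχ (z : Fin ℓ → ZMod n) : χ z = ∏ i, ZMod.stdAddChar (T i * z i) :=
    prod_congr rfl fun i _ => ZMod.exp_val_mul_val_eq_stdAddChar n (T i) (z i)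
  have hzeros : #{i | T i = 0} = ℓ - degT := by
    have hsplit := card_filter_add_card_filter_not (s := univ) fun i => T i = 0
    rw [card_univ, Fintype.card_fin] at hsplit
    simp only [degT, ne_eq]
    omega
  have hlam : ((ℓ - degT).choose t : ℂ) = ℓ.choose t * (lam : ℂ) := by
    have hdeg : degT ≤ ℓ := (card_le_univ _).trans_eq (Fintype.card_fin ℓ)
    exact_mod_cast congrArg Complex.ofReal (Nat.cast_choose_sub_eq_choose_mul ℓ degT t hdeg)
  simp_rw [hχ, AddChar.sum_prod_apply_mul_add_ite (ZMod.isPrimitive_stdAddChar n), ← sum_mul]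
  rw [← sum_filter, sum_const, filter_subset_powersetCard, univ_inter, card_powersetCard, hzeros,
    nsmul_eq_mul, hlam, ZMod.card, Fintype.card_fin]
  ring

/-- Eigenvalues of the Johnson-approximating Cayley graph `C_{n,ℓ,α}` on `(ℤ/nℤ)^ℓ`:
the character `χ_T` is an eigenvector of the (unnormalized) walk sum with eigenvalue
`C(ℓ−|T|, (1−α)ℓ−|T|)/C(ℓ, (1−α)ℓ)` if `|T| ≤ (1−α)ℓ`, and `0` otherwise. -/
theorem cayley_johnson_eigenvalues (n ℓ t : ℕ) [NeZero n] (α : ℝ)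
    (hα : 0 < α ∧ α < 1) (hℓ : 1 ≤ ℓ) (hn : ℓ < n)
    (ht : (t : ℝ) = α * ℓ)
    (T : Fin ℓ → ZMod n) (x : Fin ℓ → ZMod n) :
    let χ : (Fin ℓ → ZMod n) → ℂ := fun z =>
      ∏ i, Complex.exp (2 * Real.pi * Complex.I * ((T i).val : ℂ) * ((z i).val : ℂ) / (n : ℂ))
    let degT : ℕ := (Finset.univ.filter fun i => T i ≠ 0).card
    let lam : ℝ :=
      if degT ≤ ℓ - t then
        ((ℓ - degT).choose (ℓ - t - degT) : ℝ) / ((ℓ.choose (ℓ - t)) : ℝ)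
      else 0
    (∑ S ∈ Finset.powersetCard t (Finset.univ : Finset (Fin ℓ)),
        ∑ y : Fin ℓ → ZMod n, χ (fun i => x i + if i ∈ S then y i else 0))
      = ((ℓ.choose t : ℂ) * (n : ℂ) ^ ℓ) * (lam : ℂ) * χ x :=
  cayley_johnson_eigenvalues_general n ℓ t T x
end

section
/- Let F : (ℤ/nℤ)^ℓ → ℝ be permutation-invariant, and for each i let F_i(X) = Σ_{|T|=i} F̂(T)χ_T(X) be its level-i part and η_i = E_X[F_i(X)²] the level-i Fourier weight. Then E_{X ∈ (ℤ/nℤ)^i}[f_{i,F}(X)²] = η_i / C(ℓ,i), where f_{i,F} is as defined from the Fourier coefficients of F and C(ℓ,i) is a binomial coefficient. -/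
open Finset

/-- The character `χ_T` on `(ℤ/nℤ)^k`. -/
noncomputable def cayleyChar {n k : ℕ} (T z : Fin k → ZMod n) : ℂ :=
  ∏ i, Complex.exp (2 * Real.pi * Complex.I * ((T i).val : ℂ) * ((z i).val : ℂ) / (n : ℂ))

/-- Fourier coefficient of `F : (ℤ/nℤ)^ℓ → ℝ` at `T`. -/
noncomputable def fCoeff (n ℓ : ℕ) [NeZero n] (F : (Fin ℓ → ZMod n) → ℝ)
    (T : Fin ℓ → ZMod n) : ℂ :=
  (1 / (n : ℂ) ^ ℓ) * ∑ x : Fin ℓ → ZMod n, (F x : ℂ) * (starRingEnd ℂ) (cayleyChar T x)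

/-- Pad a tuple in `(ℤ/nℤ)^i` with zeros to a tuple in `(ℤ/nℤ)^ℓ`. -/
def padTuple (n ℓ i : ℕ) (T : Fin i → ZMod n) : Fin ℓ → ZMod n :=
  fun j => if hj : (j : ℕ) < i then T ⟨j, hj⟩ else 0

/-- Glue a prefix `A ∈ (ℤ/nℤ)^a` with a suffix `Y ∈ (ℤ/nℤ)^{ℓ-a}`. -/
def glueTuple (n ℓ a : ℕ) (A : Fin a → ZMod n) (Y : Fin (ℓ - a) → ZMod n) :
    Fin ℓ → ZMod n :=
  fun j => if hj : (j : ℕ) < a then A ⟨j, hj⟩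
           else Y ⟨(j : ℕ) - a, by have := j.isLt; omega⟩

/-- The function `f_{i,F}` built from the level-`i` Fourier coefficients of `F`
supported on the first `i` coordinates. -/
noncomputable def juntaPart (n ℓ i : ℕ) [NeZero n] (F : (Fin ℓ → ZMod n) → ℝ)
    (x : Fin i → ZMod n) : ℂ :=
  ∑ T ∈ Finset.univ.filter (fun T : Fin i → ZMod n => ∀ j, T j ≠ 0),
    fCoeff n ℓ F (padTuple n ℓ i T) * cayleyChar T x

/-- The restriction density `δ_A(F)`: the average of `F` after fixing the first
`a` coordinates to `A`. -/
noncomputable def resDensity (n ℓ a : ℕ) [NeZero n] (F : (Fin ℓ → ZMod n) → ℝ)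
    (A : Fin a → ZMod n) : ℝ :=
  (1 / (n : ℝ) ^ (ℓ - a)) * ∑ Y : Fin (ℓ - a) → ZMod n, F (glueTuple n ℓ a A Y)

/-- The level-`i` part of `F`. -/
noncomputable def levelPart (n ℓ i : ℕ) [NeZero n] (F : (Fin ℓ → ZMod n) → ℝ)
    (X : Fin ℓ → ZMod n) : ℂ :=
  ∑ T ∈ Finset.univ.filter
      (fun T : Fin ℓ → ZMod n => (Finset.univ.filter fun j => T j ≠ 0).card = i),
    fCoeff n ℓ F T * cayleyChar T X

/-!
By Parseval, both sides are sums of squared Fourier coefficients: the left one of the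
`|F̂(T,0,…,0)|²` with `T ∈ (ℤ/nℤ ∖ 0)^i`, the right one of all `|F̂(T)|²` with `|T| = i`, divided
by `C(ℓ,i)`. Since `F` is symmetric so is `F̂`, hence each of the `C(ℓ,i)` possible supports of
size `i` contributes as much as the support `{0, …, i-1}`, and that contribution is the left sum.
-/

section Characters

variable {n k : ℕ} [NeZero n]

lemma cayleyChar_eq_prod_stdAddChar (T z : Fin k → ZMod n) :
    cayleyChar T z = ∏ j, ZMod.stdAddChar (T j * z j) := by
  refine prod_congr rfl fun j _ => ?_
  have hval : T j * z j = (((T j).val * (z j).val : ℕ) : ZMod n) := by simp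
  rw [hval, ZMod.stdAddChar_apply, ZMod.toCircle_natCast]
  push_cast
  ring_nf

lemma sum_cayleyChar_mul_conj (T S : Fin k → ZMod n) :
    ∑ z, cayleyChar T z * starRingEnd ℂ (cayleyChar S z) = if T = S then (n : ℂ) ^ k else 0 := by
  have hterm : ∀ z, cayleyChar T z * starRingEnd ℂ (cayleyChar S z)
      = ∏ j, ZMod.stdAddChar (z j * (T j - S j)) := fun z => by
    simp only [cayleyChar_eq_prod_stdAddChar, map_prod, ← AddChar.map_neg_eq_conj,
      ← prod_mul_distrib, ← AddChar.map_add_eq_mul]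
    congr! 2
    ring
  simp only [hterm, ← Fintype.prod_sum fun j x => ZMod.stdAddChar (x * (T j - S j)),
    AddChar.sum_mulShift _ (ZMod.isPrimitive_stdAddChar n), sub_eq_zero, ZMod.card,
    Nat.cast_ite, Nat.cast_zero, Fintype.prod_ite_zero, prod_const, card_univ, Fintype.card_fin,
    funext_iff]

lemma sum_normSq_sum_mul_cayleyChar (s : Finset (Fin k → ZMod n)) (c : (Fin k → ZMod n) → ℂ) :
    ∑ z, Complex.normSq (∑ T ∈ s, c T * cayleyChar T z)
      = (n : ℝ) ^ k * ∑ T ∈ s, Complex.normSq (c T) := by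
  apply Complex.ofReal_injective
  push_cast
  simp only [← Complex.mul_conj, map_sum, map_mul, sum_mul_sum]
  rw [sum_comm, mul_sum]
  refine sum_congr rfl fun T hT => ?_
  rw [sum_comm]
  simp only [mul_mul_mul_comm (c T) (cayleyChar T _), ← mul_sum, sum_cayleyChar_mul_conj,
    mul_ite, mul_zero, sum_ite_eq, if_pos hT]
  ring

lemma cayleyChar_comp_perm (π : Equiv.Perm (Fin k)) (T z : Fin k → ZMod n) :
    cayleyChar (T ∘ π) z = cayleyChar T (z ∘ π.symm) := by
  simp only [cayleyChar_eq_prod_stdAddChar]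
  rw [← Equiv.prod_comp π fun j => ZMod.stdAddChar (T j * (z ∘ π.symm) j)]
  simp

end Characters

lemma fCoeff_comp_perm {n ℓ : ℕ} [NeZero n] (F : (Fin ℓ → ZMod n) → ℝ)
    (hF : ∀ (π : Equiv.Perm (Fin ℓ)) x, F (x ∘ π) = F x) (π : Equiv.Perm (Fin ℓ))
    (T : Fin ℓ → ZMod n) : fCoeff n ℓ F (T ∘ π) = fCoeff n ℓ F T := by
  unfold fCoeff
  congr 1
  calc ∑ x, (F x : ℂ) * starRingEnd ℂ (cayleyChar (T ∘ π) x)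
      = ∑ x, (F (x ∘ π.symm) : ℂ) * starRingEnd ℂ (cayleyChar T (x ∘ π.symm)) := by
        simp only [cayleyChar_comp_perm, hF]
    _ = ∑ x, (F x : ℂ) * starRingEnd ℂ (cayleyChar T x) :=
        Equiv.sum_comp (π.arrowCongr (Equiv.refl _)) fun x =>
          (F x : ℂ) * starRingEnd ℂ (cayleyChar T x)

lemma Finset.exists_perm_mem_iff_mem {ι : Type*} [Fintype ι] [DecidableEq ι] {s t : Finset ι}
    (h : #s = #t) : ∃ σ : Equiv.Perm ι, ∀ x, σ x ∈ t ↔ x ∈ s := by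
  let e : {x // x ∈ s} ≃ {x // x ∈ t} := Fintype.equivOfCardEq (by simpa using h)
  let f : {x // x ∉ s} ≃ {x // x ∉ t} :=
    Fintype.equivOfCardEq (by simp [Fintype.card_subtype_compl, h])
  refine ⟨Equiv.subtypeCongr e f, fun x => ?_⟩
  by_cases hx : x ∈ s
  · simp [Equiv.subtypeCongr, hx]
  · simpa [Equiv.subtypeCongr, hx] using (f ⟨x, hx⟩).2

section Support

variable {ι M β : Type*} [Fintype ι] [DecidableEq ι] [Zero M] [Fintype M] [DecidableEq M]
  [AddCommMonoid β] (g : (ι → M) → β)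

lemma sum_filter_support_eq_of_card_eq (hg : ∀ (σ : Equiv.Perm ι) T, g (T ∘ σ) = g T)
    {S S' : Finset ι} (h : #S = #S') :
    ∑ T with ({j | T j ≠ 0} : Finset ι) = S, g T
      = ∑ T with ({j | T j ≠ 0} : Finset ι) = S', g T := by
  obtain ⟨σ, hσ⟩ := Finset.exists_perm_mem_iff_mem h
  refine sum_equiv (σ.arrowCongr (Equiv.refl M)) (fun T => ?_) fun T _ => (hg σ.symm T).symm
  simp only [mem_filter, mem_univ, true_and, Finset.ext_iff, Equiv.arrowCongr_apply,
    Equiv.coe_refl, Function.comp_apply, id]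
  constructor
  · intro hT x
    rw [hT, ← hσ, Equiv.apply_symm_apply]
  · intro hT x
    rw [← hσ, ← hT, Equiv.symm_apply_apply]

lemma sum_filter_card_support_eq (hg : ∀ (σ : Equiv.Perm ι) T, g (T ∘ σ) = g T) (S : Finset ι) :
    ∑ T with #{j | T j ≠ 0} = #S, g T
      = (Fintype.card ι).choose #S • ∑ T with ({j | T j ≠ 0} : Finset ι) = S, g T := by
  have hmaps : ∀ T ∈ ({T | #{j | T j ≠ 0} = #S} : Finset (ι → M)),
      ({j | T j ≠ 0} : Finset ι) ∈ powersetCard #S univ := by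
    intro T hT
    simpa using hT
  rw [← sum_fiberwise_of_maps_to hmaps, ← card_univ, ← card_powersetCard, ← sum_const]
  refine sum_congr rfl fun S' hS' => ?_
  rw [mem_powersetCard_univ] at hS'
  rw [filter_filter, ← sum_filter_support_eq_of_card_eq g hg hS']
  exact sum_congr (filter_congr fun T _ => ⟨And.right, fun hT => ⟨by rw [hT, hS'], hT⟩⟩)
    fun _ _ => rfl

end Support

lemma sum_filter_support_eq_sum_padTuple {n ℓ i : ℕ} [NeZero n] {β : Type*} [AddCommMonoid β]
    (hi : i ≤ ℓ) (g : (Fin ℓ → ZMod n) → β) :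
    ∑ T with ({j | T j ≠ 0} : Finset (Fin ℓ)) = ({j | (j : ℕ) < i} : Finset (Fin ℓ)), g T
      = ∑ T : Fin i → ZMod n with ∀ j, T j ≠ 0, g (padTuple n ℓ i T) := by
  symm
  refine sum_nbij' (padTuple n ℓ i) (fun T j => T (Fin.castLE hi j)) ?_ ?_ ?_ ?_ fun _ _ => rfl
  · intro T hT
    simp only [mem_filter, mem_univ, true_and] at hT ⊢
    ext j
    by_cases hj : (j : ℕ) < i <;> simp [padTuple, hj, hT]
  · intro T hT
    simp only [mem_filter, mem_univ, true_and, Finset.ext_iff] at hT ⊢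
    exact fun j => (hT _).2 j.2
  · intro T _
    ext j
    simp [padTuple]
  · intro T hT
    simp only [mem_filter, mem_univ, true_and, Finset.ext_iff] at hT
    ext j
    by_cases hj : (j : ℕ) < i
    · simp [padTuple, hj]
    · simpa [padTuple, hj, eq_comm] using mt (hT j).1 hj

/-- `E_{X∈(ℤ/nℤ)^i}[f_{i,F}(X)²] = η_i / C(ℓ,i)` where `η_i = E[F_i²]` is the
level-`i` Fourier weight of `F`. -/
theorem juntaPart_second_moment (n ℓ i : ℕ) [NeZero n] (hi : i ≤ ℓ)
    (F : (Fin ℓ → ZMod n) → ℝ)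
    (hinv : ∀ (π : Equiv.Perm (Fin ℓ)) (x : Fin ℓ → ZMod n), F (x ∘ π) = F x) :
    (1 / (n : ℝ) ^ i) * ∑ x : Fin i → ZMod n, Complex.normSq (juntaPart n ℓ i F x)
      = ((1 / (n : ℝ) ^ ℓ) * ∑ X : Fin ℓ → ZMod n, Complex.normSq (levelPart n ℓ i F X))
          / (ℓ.choose i : ℝ) := by
  have hn : (n : ℝ) ≠ 0 := Nat.cast_ne_zero.mpr (NeZero.ne n)
  have hchoose : (ℓ.choose i : ℝ) ≠ 0 := Nat.cast_ne_zero.mpr (Nat.choose_pos hi).ne'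
  have hcard : #({j | (j : ℕ) < i} : Finset (Fin ℓ)) = i := by
    simp [Fin.card_filter_val_lt, hi]
  have hweight := sum_filter_card_support_eq (fun T => Complex.normSq (fCoeff n ℓ F T))
    (fun π T => by rw [fCoeff_comp_perm F hinv]) ({j | (j : ℕ) < i} : Finset (Fin ℓ))
  rw [hcard, Fintype.card_fin, sum_filter_support_eq_sum_padTuple hi, nsmul_eq_mul] at hweight
  simp only [juntaPart, levelPart, sum_normSq_sum_mul_cayleyChar, hweight]
  field_simp
end

section
/- Let F : Ω → ℝ be a function on a finite probability space, i ∈ ℕ, and let F_i be the projection of F onto a subspace orthogonal complement-decomposed as F = Σ_j F_j with ⟨F_j, F_k⟩ = 0 for j ≠ k. Set η_i = E[F_i²]. Then for every ε > 0: E[F_i⁴] ≥ 4ε³η_i − 3ε⁴·E[F] + B, where B = 4ε³·E[(F³ − F)F_i] + 3ε⁴·E[F − F⁴]. In particular, if F is {0,1}-valued (so F³ = F and F⁴ = F), then E[F_i⁴] ≥ 4ε³η_i − 3ε⁴E[F]. -/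
/-!
Orthogonality of the decomposition gives `η_i = E[F·F_i]`. Summing against `μ` the pointwise
inequality `4(εF)³F_i - 3(εF)⁴ ≤ F_i⁴`, whose defect factors as
`(F_i - εF)²((F_i + εF)² + 2(εF)²)`, and expanding `B` linearly gives the bound. For
`{0,1}`-valued `F` the correction `B` vanishes.
-/

open Finset

lemma sum_mul_sum_mul_component_eq {ι Ω R : Type*} [Fintype ι] [Fintype Ω] [CommSemiring R]
    (μ : Ω → R) (f : ι → Ω → R) (horth : ∀ j k, j ≠ k → ∑ x, μ x * (f j x * f k x) = 0)
    (i : ι) : ∑ x, μ x * ((∑ j, f j x) * f i x) = ∑ x, μ x * f i x ^ 2 := by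
  simp_rw [sum_mul, mul_sum]
  rw [sum_comm, sum_eq_single i (fun j _ hji => horth j i hji) (by simp)]
  simp_rw [sq]

section OrderedRing

variable {R : Type*} [CommRing R] [LinearOrder R] [IsStrictOrderedRing R]

lemma four_mul_pow_three_mul_sub_le (t b : R) : 4 * t ^ 3 * b - 3 * t ^ 4 ≤ b ^ 4 := by
  have hfactor :
      b ^ 4 - (4 * t ^ 3 * b - 3 * t ^ 4) = (b - t) ^ 2 * ((b + t) ^ 2 + 2 * t ^ 2) := by
    ring
  have hnonneg : 0 ≤ (b - t) ^ 2 * ((b + t) ^ 2 + 2 * t ^ 2) := by positivity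
  linarith

lemma weighted_fourth_moment_ge {Ω : Type*} [Fintype Ω] (μ : Ω → R) (hμ : ∀ x, 0 ≤ μ x)
    (f g : Ω → R) (ε : R) :
    4 * ε ^ 3 * ∑ x, μ x * (f x ^ 3 * g x) - 3 * ε ^ 4 * ∑ x, μ x * f x ^ 4
      ≤ ∑ x, μ x * g x ^ 4 := by
  simp_rw [mul_sum, ← sum_sub_distrib]
  refine sum_le_sum fun x _ => ?_
  have hx := mul_le_mul_of_nonneg_left (four_mul_pow_three_mul_sub_le (ε * f x) (g x)) (hμ x)
  linear_combination hx

end OrderedRing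

theorem fourth_moment_lower_bound_general {Ω : Type*} [Fintype Ω]
    (μ : Ω → ℝ) (hμ0 : ∀ x, 0 ≤ μ x)
    (m : ℕ) (Fj : Fin m → Ω → ℝ) (F : Ω → ℝ)
    (hdecomp : ∀ x, F x = ∑ j, Fj j x)
    (horth : ∀ j k, j ≠ k → ∑ x, μ x * (Fj j x * Fj k x) = 0)
    (i : Fin m) :
    (∀ ε : ℝ, 0 < ε →
      4 * ε ^ 3 * (∑ x, μ x * (Fj i x) ^ 2) - 3 * ε ^ 4 * (∑ x, μ x * F x)
          + (4 * ε ^ 3 * (∑ x, μ x * ((F x ^ 3 - F x) * Fj i x))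
             + 3 * ε ^ 4 * (∑ x, μ x * (F x - F x ^ 4)))
        ≤ ∑ x, μ x * (Fj i x) ^ 4) ∧
    ((∀ x, F x = 0 ∨ F x = 1) → ∀ ε : ℝ, 0 < ε →
      4 * ε ^ 3 * (∑ x, μ x * (Fj i x) ^ 2) - 3 * ε ^ 4 * (∑ x, μ x * F x)
        ≤ ∑ x, μ x * (Fj i x) ^ 4) := by
  have hη : ∑ x, μ x * (F x * Fj i x) = ∑ x, μ x * Fj i x ^ 2 := by
    simp_rw [hdecomp]
    exact sum_mul_sum_mul_component_eq μ Fj horth i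
  have hmain : ∀ ε : ℝ,
      4 * ε ^ 3 * (∑ x, μ x * (Fj i x) ^ 2) - 3 * ε ^ 4 * (∑ x, μ x * F x)
          + (4 * ε ^ 3 * (∑ x, μ x * ((F x ^ 3 - F x) * Fj i x))
             + 3 * ε ^ 4 * (∑ x, μ x * (F x - F x ^ 4)))
        ≤ ∑ x, μ x * (Fj i x) ^ 4 := by
    intro ε
    simp only [sub_mul, mul_sub, sum_sub_distrib, hη]
    linarith [weighted_fourth_moment_ge μ hμ0 F (Fj i) ε]
  refine ⟨fun ε _ => hmain ε, fun hF ε _ => ?_⟩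
  have hcube : ∀ x, F x ^ 3 = F x := fun x => by rcases hF x with h | h <;> simp [h]
  have hfourth : ∀ x, F x ^ 4 = F x := fun x => by rcases hF x with h | h <;> simp [h]
  simpa [hcube, hfourth] using hmain ε

/-- Lower bound on the fourth moment of an orthogonal component of `F`. -/
theorem fourth_moment_lower_bound {Ω : Type*} [Fintype Ω]
    (μ : Ω → ℝ) (hμ0 : ∀ x, 0 ≤ μ x) (hμ1 : ∑ x, μ x = 1)
    (m : ℕ) (Fj : Fin m → Ω → ℝ) (F : Ω → ℝ)
    (hdecomp : ∀ x, F x = ∑ j, Fj j x)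
    (horth : ∀ j k, j ≠ k → ∑ x, μ x * (Fj j x * Fj k x) = 0)
    (i : Fin m) :
    (∀ ε : ℝ, 0 < ε →
      4 * ε ^ 3 * (∑ x, μ x * (Fj i x) ^ 2) - 3 * ε ^ 4 * (∑ x, μ x * F x)
          + (4 * ε ^ 3 * (∑ x, μ x * ((F x ^ 3 - F x) * Fj i x))
             + 3 * ε ^ 4 * (∑ x, μ x * (F x - F x ^ 4)))
        ≤ ∑ x, μ x * (Fj i x) ^ 4) ∧
    ((∀ x, F x = 0 ∨ F x = 1) → ∀ ε : ℝ, 0 < ε →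
      4 * ε ^ 3 * (∑ x, μ x * (Fj i x) ^ 2) - 3 * ε ^ 4 * (∑ x, μ x * F x)
        ≤ ∑ x, μ x * (Fj i x) ^ 4) :=
  fourth_moment_lower_bound_general μ hμ0 m Fj F hdecomp horth i
end

section
/- Let p : [0,1] → [0,1] satisfy p(x) ≤ ν² for x ∈ [0,β] and p(x) ≥ 1−ν² for x ∈ [β+ν², 1], for some β ∈ (0,1) and 0 < ν with β+ν ≤ 1. For c ∈ {0, 1, …, ⌊1/ν⌋}, let p^c be such an approximate threshold at β + cν² with accuracy ν². Then for every δ ∈ [0,1]: E_{c uniform in {0,…,⌊1/ν⌋}}[p^c(δ) − p^c(δ)²] ≤ O(ν). (Concretely: at most one index c has p^c(δ) − p^c(δ)² > 2ν², while each term is at most 1/4, so the average is at most ν·(1/4)/(1) + 2ν² ≤ O(ν).) -/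
/-!
The non-Booleanity `x - x²` is at most `min (x, 1 - x)` and always at most `1/4`. So `p^c(δ)`
has non-Booleanity at most `ν²` unless `δ` lies in the window `[β + cν², β + (c+1)ν²)`, and
these windows are disjoint: the only candidate is `c = ⌊(δ - β)/ν²⌋₊`. Summing over the
`⌊1/ν⌋₊ + 1 > 1/ν` shifts gives at most `(⌊1/ν⌋₊ + 1) ν² + 1/4`, whose average is `≤ ν² + ν/4`.
-/

open Finset

lemma sub_sq_le_self (x : ℝ) : x - x ^ 2 ≤ x := by nlinarith [sq_nonneg x]

lemma sub_sq_le_one_sub (x : ℝ) : x - x ^ 2 ≤ 1 - x := by nlinarith [sq_nonneg (1 - x)]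

lemma sub_sq_le_one_fourth (x : ℝ) : x - x ^ 2 ≤ 1 / 4 := by nlinarith [sq_nonneg (x - 1 / 2)]

lemma Nat.eq_floor_of_le_of_lt {K : Type*} [Field K] [LinearOrder K] [IsStrictOrderedRing K]
    [FloorSemiring K] {a h t : K} {c : ℕ} (hh : 0 < h)
    (hlo : a + c * h ≤ t) (hhi : t < a + (c + 1) * h) : c = ⌊(t - a) / h⌋₊ := by
  have hc : (c : K) ≤ (t - a) / h := by rw [le_div_iff₀ hh]; linarith
  refine ((Nat.floor_eq_iff ((Nat.cast_nonneg c).trans hc)).mpr ⟨hc, ?_⟩).symm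
  rw [div_lt_iff₀ hh]; linarith

lemma one_div_floor_one_div_add_one_lt {K : Type*} [Field K] [LinearOrder K]
    [IsStrictOrderedRing K] [FloorSemiring K] {x : K} (hx : 0 < x) :
    1 / ((⌊1 / x⌋₊ : K) + 1) < x :=
  (one_div_lt (by positivity) hx).mpr (Nat.lt_floor_add_one _)

lemma Finset.sum_le_card_nsmul_add_of_le_of_ne {ι M : Type*} [AddCommMonoid M] [PartialOrder M]
    [IsOrderedAddMonoid M] (s : Finset ι) (f : ι → M) (i₀ : ι) {ε m : M} (hm : 0 ≤ m)
    (hf : ∀ i ∈ s, i ≠ i₀ → f i ≤ ε) (hi₀ : f i₀ ≤ ε + m) :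
    ∑ i ∈ s, f i ≤ #s • ε + m := by
  classical
  by_cases hs : i₀ ∈ s
  · rw [← Finset.add_sum_erase s f hs, ← Finset.card_erase_add_one hs, succ_nsmul]
    have hrest : ∑ i ∈ s.erase i₀, f i ≤ #(s.erase i₀) • ε :=
      Finset.sum_le_card_nsmul _ _ _ fun i hi => hf i (mem_of_mem_erase hi) (ne_of_mem_erase hi)
    calc f i₀ + ∑ i ∈ s.erase i₀, f i ≤ ε + m + #(s.erase i₀) • ε := add_le_add hi₀ hrest
      _ = #(s.erase i₀) • ε + ε + m := by rw [add_right_comm, add_comm ε]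
  · calc ∑ i ∈ s, f i ≤ #s • ε :=
          Finset.sum_le_card_nsmul _ _ _ fun i hi => hf i hi (ne_of_mem_of_not_mem hi hs)
      _ ≤ #s • ε + m := le_add_of_nonneg_right hm

theorem averaged_threshold_non_booleanity_general (β ν : ℝ)
    (hν : 0 < ν)
    (p : ℕ → ℝ → ℝ)
    (hlow : ∀ c ≤ ⌊1/ν⌋₊, ∀ x ∈ Set.Icc (0:ℝ) (β + (c:ℝ) * ν^2), p c x ≤ ν^2)
    (hhigh : ∀ c ≤ ⌊1/ν⌋₊, ∀ x ∈ Set.Icc (β + ((c:ℝ)+1) * ν^2) 1, 1 - ν^2 ≤ p c x)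
    (δ : ℝ) (hδ : δ ∈ Set.Icc (0:ℝ) 1) :
    (1 / ((⌊1/ν⌋₊ : ℝ) + 1)) * ∑ c ∈ Finset.range (⌊1/ν⌋₊ + 1), (p c δ - (p c δ)^2)
      ≤ ν / 4 + 2 * ν^2 := by
  set N := ⌊1/ν⌋₊
  have hν2 : 0 < ν ^ 2 := by positivity
  have hgood : ∀ c ∈ range (N + 1), c ≠ ⌊(δ - β) / ν ^ 2⌋₊ → p c δ - p c δ ^ 2 ≤ ν ^ 2 := by
    intro c hc hne
    have hcN : c ≤ N := mem_range_succ_iff.mp hc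
    rcases le_or_gt δ (β + c * ν ^ 2) with hδlow | hδlow
    · exact (sub_sq_le_self _).trans (hlow c hcN δ ⟨hδ.1, hδlow⟩)
    rcases lt_or_ge δ (β + (c + 1) * ν ^ 2) with hδhigh | hδhigh
    · exact absurd (Nat.eq_floor_of_le_of_lt hν2 hδlow.le hδhigh) hne
    · linarith [sub_sq_le_one_sub (p c δ), hhigh c hcN δ ⟨hδhigh, hδ.2⟩]
  have hsum := Finset.sum_le_card_nsmul_add_of_le_of_ne _ _ _ (by norm_num : (0:ℝ) ≤ 1 / 4) hgood
    (by linarith [sub_sq_le_one_fourth (p ⌊(δ - β) / ν ^ 2⌋₊ δ)])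
  rw [card_range, nsmul_eq_mul, Nat.cast_add, Nat.cast_one] at hsum
  have hN : 1 / ((N : ℝ) + 1) < ν := one_div_floor_one_div_add_one_lt hν
  calc 1 / ((N : ℝ) + 1) * ∑ c ∈ range (N + 1), (p c δ - p c δ ^ 2)
      ≤ 1 / ((N : ℝ) + 1) * (((N : ℝ) + 1) * ν ^ 2 + 1 / 4) := by gcongr
    _ = ν ^ 2 + 1 / ((N : ℝ) + 1) * (1 / 4) := by field_simp
    _ ≤ ν / 4 + 2 * ν ^ 2 := by nlinarith

/-- Averaging the non-Booleanity of a family of shifted approximate threshold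
functions over the shifts makes it `O(ν)` at every fixed point `δ`. -/
theorem averaged_threshold_non_booleanity (β ν : ℝ)
    (hβ : 0 < β ∧ β < 1) (hν : 0 < ν) (hβν : β + ν ≤ 1)
    (p : ℕ → ℝ → ℝ)
    (hrange : ∀ c ≤ ⌊1/ν⌋₊, ∀ x ∈ Set.Icc (0:ℝ) 1, 0 ≤ p c x ∧ p c x ≤ 1)
    (hlow : ∀ c ≤ ⌊1/ν⌋₊, ∀ x ∈ Set.Icc (0:ℝ) (β + (c:ℝ) * ν^2), p c x ≤ ν^2)
    (hhigh : ∀ c ≤ ⌊1/ν⌋₊, ∀ x ∈ Set.Icc (β + ((c:ℝ)+1) * ν^2) 1, 1 - ν^2 ≤ p c x)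
    (δ : ℝ) (hδ : δ ∈ Set.Icc (0:ℝ) 1) :
    (1 / ((⌊1/ν⌋₊ : ℝ) + 1)) * ∑ c ∈ Finset.range (⌊1/ν⌋₊ + 1), (p c δ - (p c δ)^2)
      ≤ ν / 4 + 2 * ν^2 :=
  averaged_threshold_non_booleanity_general β ν hν p hlow hhigh δ hδ
end

section
/- Let G be a finite graph with normalized adjacency operator T that is positive semidefinite, and let S be a set of vertices with indicator F = 1_S. Let S̃ be any set of vertices and G' = 1_{S∩ complement(S̃)}. If the edge expansion of S ∩ complement(S̃) satisfies Φ(S ∩ complement(S̃)) ≥ 1 − η²/100 (i.e. ⟨G', T G'⟩ ≤ (η²/100)·μ(S∩complement(S̃)) where μ is the stationary measure), then Pr over a random edge (L,L') of G of the event [L, L' ∈ S and (L ∉ S̃ or L' ∉ S̃)] is at most (η/5)·μ(S). -/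
/-!
The bilinear form `B f g = ⟨f, T g⟩_μ` (`edgeForm μ T`) is symmetric because `T` is reversible
and positive semidefinite because `T` is PSD. An edge inside `S` with an endpoint outside `S̃`
is counted by `G' x F y + F x G' y`, so the edges in question have weight at most
`2 B G' F`. Cauchy–Schwarz for `B` gives `B G' F ^ 2 ≤ B G' G' · B F F`, where
`B G' G' ≤ η² / 100 · μ(S)` is the expansion hypothesis and `B F F ≤ μ(S)` holds because `T`
is stochastic.
-/

open Finset Matrix

lemma LinearMap.BilinForm.apply_le_mul_of_apply_self_le {M : Type*} [AddCommGroup M]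
    [Module ℝ M] {B : LinearMap.BilinForm ℝ M} (hs : ∀ x, 0 ≤ B x x) (hB : B.IsSymm)
    {x y : M} {c m : ℝ} (hc : 0 ≤ c) (hx : B x x ≤ c ^ 2 * m) (hy : B y y ≤ m) :
    B x y ≤ c * m := by
  have hm : 0 ≤ m := (hs y).trans hy
  refine (abs_le_of_sq_le_sq' ?_ (by positivity)).2
  calc B x y ^ 2 ≤ B x x * B y y := B.apply_sq_le_of_symm hs (isSymm_iff.mp hB) x y
    _ ≤ c ^ 2 * m * m := mul_le_mul hx hy (hs y) (by positivity)
    _ = (c * m) ^ 2 := by ring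

section EdgeForm

variable {V : Type*} [Fintype V] [DecidableEq V] (μ : V → ℝ) (T : Matrix V V ℝ)

noncomputable def edgeForm : LinearMap.BilinForm ℝ (V → ℝ) :=
  (Matrix.of fun x y => μ x * T x y).toBilin'

variable {μ T}

lemma edgeForm_apply (f g : V → ℝ) :
    edgeForm μ T f g = ∑ x, ∑ y, μ x * T x y * (f x * g y) := by
  simp only [edgeForm, Matrix.toBilin'_apply, Matrix.of_apply]
  exact sum_congr rfl fun x _ => sum_congr rfl fun y _ => by ring

lemma edgeForm_apply_eq_sum_mulVec (f g : V → ℝ) :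
    edgeForm μ T f g = ∑ x, μ x * (f x * (T *ᵥ g) x) := by
  simp only [edgeForm_apply, mulVec, dotProduct, mul_sum]
  exact sum_congr rfl fun x _ => sum_congr rfl fun y _ => by ring

lemma edgeForm_isSymm (hTrev : ∀ x y, μ x * T x y = μ y * T y x) :
    (edgeForm μ T).IsSymm := by
  refine Matrix.isSymm_toBilin'_iff_isSymm.mpr (Matrix.IsSymm.ext fun x y => ?_)
  exact hTrev y x

lemma edgeForm_le_sum_mul_of_le_one (hμ0 : ∀ x, 0 ≤ μ x) (hT0 : ∀ x y, 0 ≤ T x y)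
    (hTstoch : ∀ x, ∑ y, T x y = 1) {f g : V → ℝ} (hf : 0 ≤ f) (hg : g ≤ 1) :
    edgeForm μ T f g ≤ ∑ x, μ x * f x :=
  calc edgeForm μ T f g ≤ ∑ x, ∑ y, μ x * T x y * f x := by
        rw [edgeForm_apply]
        gcongr with x _ y _
        · exact mul_nonneg (hμ0 x) (hT0 x y)
        · exact mul_le_of_le_one_right (hf x) (hg y)
    _ = ∑ x, μ x * f x := by
        simp only [← sum_mul, ← mul_sum, hTstoch, mul_one]

lemma edgeForm_indicator_self_le (hμ0 : ∀ x, 0 ≤ μ x) (hT0 : ∀ x y, 0 ≤ T x y)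
    (hTstoch : ∀ x, ∑ y, T x y = 1) (A : Finset V) :
    edgeForm μ T ((↑A : Set V).indicator 1) ((↑A : Set V).indicator 1) ≤ ∑ x ∈ A, μ x := by
  refine (edgeForm_le_sum_mul_of_le_one hμ0 hT0 hTstoch ?_ ?_).trans_eq ?_
  · exact Set.indicator_nonneg fun _ _ => zero_le_one
  · exact Set.indicator_le_self' fun _ _ => zero_le_one
  · simp [Set.indicator_apply]

lemma sum_edges_inside_leaving_le (hμ0 : ∀ x, 0 ≤ μ x) (hT0 : ∀ x y, 0 ≤ T x y)
    (S S' : Finset V) :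
    ∑ x, ∑ y, μ x * T x y * (if x ∈ S ∧ y ∈ S ∧ (x ∉ S' ∨ y ∉ S') then (1 : ℝ) else 0) ≤
      edgeForm μ T ((↑(S \ S') : Set V).indicator 1) ((↑S : Set V).indicator 1) +
        edgeForm μ T ((↑S : Set V).indicator 1) ((↑(S \ S') : Set V).indicator 1) := by
  simp only [edgeForm_apply, ← sum_add_distrib, ← mul_add]
  gcongr with x _ y _
  · exact mul_nonneg (hμ0 x) (hT0 x y)
  · simp only [Set.indicator_apply, mem_coe, mem_sdiff, Pi.one_apply]
    split_ifs <;> simp_all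

end EdgeForm

theorem edges_outside_cover_bound_general {V : Type*} [Fintype V] [DecidableEq V]
    (μ : V → ℝ) (hμ0 : ∀ x, 0 ≤ μ x)
    (T : Matrix V V ℝ)
    (hT0 : ∀ x y, 0 ≤ T x y)
    (hTstoch : ∀ x, ∑ y, T x y = 1)
    (hTrev : ∀ x y, μ x * T x y = μ y * T y x)
    (hTpsd : ∀ f : V → ℝ, 0 ≤ ∑ x, μ x * (f x * T.mulVec f x))
    (S Stilde : Finset V) (η : ℝ) (hη : 0 ≤ η)
    (G' : V → ℝ) (hG' : G' = fun x => if x ∈ S \ Stilde then (1:ℝ) else 0)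
    (F : V → ℝ) (hF : F = fun x => if x ∈ S then (1:ℝ) else 0)
    (hexp : ∑ x, μ x * (G' x * T.mulVec G' x) ≤ η^2/100 * ∑ x ∈ S \ Stilde, μ x) :
    ∑ x, ∑ y, μ x * T x y *
        (if x ∈ S ∧ y ∈ S ∧ (x ∉ Stilde ∨ y ∉ Stilde) then (1:ℝ) else 0)
      ≤ η / 5 * ∑ x ∈ S, μ x := by
  replace hG' : G' = (↑(S \ Stilde) : Set V).indicator 1 := by
    rw [hG']; ext x; simp [Set.indicator_apply]
  replace hF : F = (↑S : Set V).indicator 1 := by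
    rw [hF]; ext x; simp [Set.indicator_apply]
  set μS := ∑ x ∈ S, μ x
  have hpsd (f : V → ℝ) : 0 ≤ edgeForm μ T f f := by
    simpa only [edgeForm_apply_eq_sum_mulVec] using hTpsd f
  have hG'G' : edgeForm μ T G' G' ≤ (η / 10) ^ 2 * μS := by
    rw [edgeForm_apply_eq_sum_mulVec, show (η / 10) ^ 2 = η ^ 2 / 100 by ring]
    refine hexp.trans ?_
    gcongr
    exact sum_le_sum_of_subset_of_nonneg sdiff_subset fun x _ _ => hμ0 x
  have hFF : edgeForm μ T F F ≤ μS := hF ▸ edgeForm_indicator_self_le hμ0 hT0 hTstoch S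
  have hG'F : edgeForm μ T G' F ≤ η / 10 * μS :=
    LinearMap.BilinForm.apply_le_mul_of_apply_self_le hpsd (edgeForm_isSymm hTrev)
      (by positivity) hG'G' hFF
  calc _ ≤ edgeForm μ T G' F + edgeForm μ T F G' := by
        rw [hG', hF]; exact sum_edges_inside_leaving_le hμ0 hT0 S Stilde
    _ = 2 * edgeForm μ T G' F := by rw [(edgeForm_isSymm hTrev).eq F G', two_mul]
    _ ≤ η / 5 * μS := by linarith

/-- If the residual pseudorandom part `S ∖ S̃` of a set `S` expands almost fully in a
graph whose normalized adjacency operator is PSD, then few edges lie inside `S` with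
an endpoint outside `S̃`. -/
theorem edges_outside_cover_bound {V : Type*} [Fintype V] [DecidableEq V]
    (μ : V → ℝ) (hμ0 : ∀ x, 0 ≤ μ x) (hμ1 : ∑ x, μ x = 1)
    (T : Matrix V V ℝ)
    (hT0 : ∀ x y, 0 ≤ T x y)
    (hTstoch : ∀ x, ∑ y, T x y = 1)
    (hTrev : ∀ x y, μ x * T x y = μ y * T y x)
    (hTpsd : ∀ f : V → ℝ, 0 ≤ ∑ x, μ x * (f x * T.mulVec f x))
    (S Stilde : Finset V) (η : ℝ) (hη : 0 ≤ η)
    (G' : V → ℝ) (hG' : G' = fun x => if x ∈ S \ Stilde then (1:ℝ) else 0)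
    (F : V → ℝ) (hF : F = fun x => if x ∈ S then (1:ℝ) else 0)
    (hexp : ∑ x, μ x * (G' x * T.mulVec G' x) ≤ η^2/100 * ∑ x ∈ S \ Stilde, μ x) :
    ∑ x, ∑ y, μ x * T x y *
        (if x ∈ S ∧ y ∈ S ∧ (x ∉ Stilde ∨ y ∉ Stilde) then (1:ℝ) else 0)
      ≤ η / 5 * ∑ x ∈ S, μ x :=
  edges_outside_cover_bound_general μ hμ0 T hT0 hTstoch hTrev hTpsd S Stilde η hη G' hG' F hF hexp
end

section
/- Let Z₁, …, Z_m be random variables each taking values in [−1,1] with E[Z_a] = 0 for all a, and suppose the pairwise covariances satisfy E_{a,b∼[m]}[|Cov(Z_a, Z_b)|] ≤ τ'. Let E be an event with Pr[E] ≥ p, and let Z = E_{a∼[m]}[Z_a]. If E[Z | E] ≥ δ, then τ' ≥ p·δ². (Consequently, if the average pairwise covariance is at most τ', then conditioning on any event of probability ≥ p cannot shift the average of the Z_a's by more than √(τ'/p).) -/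
/-!
Let `Z̄ = (1/m) ∑ₐ Zₐ`. Since the `Zₐ` are centred, `E[Zₐ Z_b] = Cov(Zₐ, Z_b)`, so
`E[Z̄²]` is the average pairwise covariance and hence at most `τ'`. On the other hand,
Cauchy–Schwarz on `E` gives `Pr[E] · E[Z̄ | E]² ≤ E[Z̄² ; E] ≤ E[Z̄²]`, and the left side is
at least `p δ²`.
-/

open Finset

section

variable {Ω ι : Type*}

lemma sum_mul_sq_const_mul_sum_eq (t : Finset Ω) (μ : Ω → ℝ) (s : Finset ι) (Z : ι → Ω → ℝ)
    (c : ℝ) :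
    ∑ x ∈ t, μ x * (c * ∑ a ∈ s, Z a x) ^ 2 =
      c ^ 2 * ∑ a ∈ s, ∑ b ∈ s, ∑ x ∈ t, μ x * (Z a x * Z b x) := by
  have hpoint : ∀ x, μ x * (c * ∑ a ∈ s, Z a x) ^ 2 =
      c ^ 2 * ∑ a ∈ s, ∑ b ∈ s, μ x * (Z a x * Z b x) := fun x => by
    simp_rw [← mul_sum, ← sum_mul]
    ring
  rw [sum_congr rfl fun x _ => hpoint x, ← mul_sum, sum_comm]
  simp_rw [sum_comm (s := t)]

/-- Cauchy–Schwarz in the form `Pr[E] · E[f | E]² ≤ E[f² ; E]`. -/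
lemma sum_mul_mul_sq_div_sum_le {μ : Ω → ℝ} {E : Finset Ω} (hμ : ∀ x ∈ E, 0 ≤ μ x)
    (f : Ω → ℝ) :
    (∑ x ∈ E, μ x) * ((∑ x ∈ E, μ x * f x) / ∑ x ∈ E, μ x) ^ 2 ≤ ∑ x ∈ E, μ x * f x ^ 2 := by
  have hCS : (∑ x ∈ E, μ x * f x) ^ 2 ≤ (∑ x ∈ E, μ x) * ∑ x ∈ E, μ x * f x ^ 2 :=
    sum_sq_le_sum_mul_sum_of_sq_le_mul E hμ (fun x hx => mul_nonneg (hμ x hx) (sq_nonneg _))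
      (fun x _ => (by ring : (μ x * f x) ^ 2 = μ x * (μ x * f x ^ 2)).le)
  have hmul_sq_div : (∑ x ∈ E, μ x) * ((∑ x ∈ E, μ x * f x) / ∑ x ∈ E, μ x) ^ 2 =
      (∑ x ∈ E, μ x * f x) ^ 2 / ∑ x ∈ E, μ x := by
    rcases eq_or_ne (∑ x ∈ E, μ x) 0 with h | h
    · simp [h]
    · field_simp
  rw [hmul_sq_div]
  exact div_le_of_le_mul₀ (sum_nonneg hμ)
    (sum_nonneg fun x hx => mul_nonneg (hμ x hx) (sq_nonneg _)) (hCS.trans_eq (mul_comm _ _))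

lemma sum_mul_sq_const_mul_sum_le_sum_abs_cov [Fintype Ω] (μ : Ω → ℝ) (s : Finset ι)
    (Z : ι → Ω → ℝ) (hmean : ∀ a ∈ s, ∑ x, μ x * Z a x = 0) (c : ℝ) :
    ∑ x, μ x * (c * ∑ a ∈ s, Z a x) ^ 2 ≤
      c ^ 2 * ∑ a ∈ s, ∑ b ∈ s,
        |(∑ x, μ x * (Z a x * Z b x)) - (∑ x, μ x * Z a x) * (∑ x, μ x * Z b x)| := by
  rw [sum_mul_sq_const_mul_sum_eq]
  gcongr with a ha b
  rw [hmean a ha, zero_mul, sub_zero]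
  exact le_abs_self _

end

theorem conditioning_does_not_introduce_correlations_general
    {Ω : Type*} [Fintype Ω]
    (μ : Ω → ℝ) (hμ0 : ∀ x, 0 ≤ μ x)
    (m : ℕ) (Z : Fin m → Ω → ℝ)
    (hmean : ∀ a, ∑ x, μ x * Z a x = 0)
    (τ' : ℝ)
    (hcov : (1 / (m:ℝ)^2) * ∑ a, ∑ b,
        |(∑ x, μ x * (Z a x * Z b x)) -
          (∑ x, μ x * Z a x) * (∑ x, μ x * Z b x)| ≤ τ')
    (E : Finset Ω) (p δ : ℝ) (hδ : 0 ≤ δ)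
    (hPrE : p ≤ ∑ x ∈ E, μ x)
    (hcond : δ ≤ (∑ x ∈ E, μ x * ((1/(m:ℝ)) * ∑ a, Z a x)) / (∑ x ∈ E, μ x)) :
    p * δ^2 ≤ τ' := by
  set Zbar : Ω → ℝ := fun x => (1/(m:ℝ)) * ∑ a, Z a x
  have hsecond : ∑ x, μ x * Zbar x ^ 2 ≤ τ' := by
    refine (sum_mul_sq_const_mul_sum_le_sum_abs_cov μ univ Z (fun a _ => hmean a) _).trans ?_
    rwa [one_div_pow]
  calc p * δ ^ 2
      ≤ (∑ x ∈ E, μ x) * ((∑ x ∈ E, μ x * Zbar x) / ∑ x ∈ E, μ x) ^ 2 := by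
        gcongr
        exact sum_nonneg fun x _ => hμ0 x
      _ ≤ ∑ x ∈ E, μ x * Zbar x ^ 2 := sum_mul_mul_sq_div_sum_le (fun x _ => hμ0 x) Zbar
      _ ≤ ∑ x, μ x * Zbar x ^ 2 := sum_le_univ_sum_of_nonneg fun x => mul_nonneg (hμ0 x) (sq_nonneg _)
      _ ≤ τ' := hsecond

/-- Conditioning on an event of probability at least `p` cannot shift the average of
centered, bounded, almost pairwise-uncorrelated random variables by more than
`√(τ'/p)`: if the conditional mean is at least `δ ≥ 0`, then `p·δ² ≤ τ'`. -/
theorem conditioning_does_not_introduce_correlations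
    {Ω : Type*} [Fintype Ω]
    (μ : Ω → ℝ) (hμ0 : ∀ x, 0 ≤ μ x) (hμ1 : ∑ x, μ x = 1)
    (m : ℕ) (hm : 0 < m) (Z : Fin m → Ω → ℝ)
    (hbdd : ∀ a x, |Z a x| ≤ 1)
    (hmean : ∀ a, ∑ x, μ x * Z a x = 0)
    (τ' : ℝ)
    (hcov : (1 / (m:ℝ)^2) * ∑ a, ∑ b,
        |(∑ x, μ x * (Z a x * Z b x)) -
          (∑ x, μ x * Z a x) * (∑ x, μ x * Z b x)| ≤ τ')
    (E : Finset Ω) (p δ : ℝ) (hp : 0 < p) (hδ : 0 ≤ δ)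
    (hPrE : p ≤ ∑ x ∈ E, μ x)
    (hcond : δ ≤ (∑ x ∈ E, μ x * ((1/(m:ℝ)) * ∑ a, Z a x)) / (∑ x ∈ E, μ x)) :
    p * δ^2 ≤ τ' :=
  conditioning_does_not_introduce_correlations_general μ hμ0 m Z hmean τ' hcov E p δ hδ hPrE hcond
end

section
/- Let q : ℝ → ℝ be a polynomial of degree d that is non-negative on the interval [a,b]. Then q can be written in the form q(x) = s₀(x) + s₁(x)·(x−a) + s₂(x)·(b−x) + s₃(x)·(x−a)(b−x) where s₀, s₁, s₂, s₃ are sums of squares of polynomials and all summands have degree at most 2d. In particular, the non-negativity of q on [a,b] has a degree-2d sum-of-squares certificate from the axioms {x ≥ a, x ≤ b}. -/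
/-!
Induct on the degree. Let `m` be the minimum of `q` on `[a, b]`, attained at `x₀`. Then
`q - m` is non-negative on `[a, b]` and vanishes at `x₀`: if `x₀ = a` it is `(x - a) h`, if
`x₀ = b` it is `(b - x) h`, and otherwise `x₀` is an interior minimum, hence a double root, and
`q - m = (x - x₀)² h`. In each case `h` is non-negative on `[a, b]` and of smaller degree, and
multiplying a certificate of `h` by `x - a`, `b - x` or `(x - x₀)²` is again a certificate once
`(x - a)²` and `(b - x)²` are absorbed into the sums of squares. Each step lowers the degree
of `q` by at least one and raises the degree of the summands by at most two.
-/

open Polynomial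

def IsSumOfSquaresPoly (s : Polynomial ℝ) : Prop :=
  ∃ r : Multiset (Polynomial ℝ), s = (r.map (· ^ 2)).sum

theorem isSumOfSquaresPoly_zero : IsSumOfSquaresPoly 0 := ⟨0, by simp⟩

theorem isSumOfSquaresPoly_C {m : ℝ} (hm : 0 ≤ m) : IsSumOfSquaresPoly (C m) :=
  ⟨{C √m}, by simp [← C_pow, Real.sq_sqrt hm]⟩

namespace IsSumOfSquaresPoly

theorem add {s t : ℝ[X]} (hs : IsSumOfSquaresPoly s) (ht : IsSumOfSquaresPoly t) :
    IsSumOfSquaresPoly (s + t) := by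
  obtain ⟨r, rfl⟩ := hs
  obtain ⟨r', rfl⟩ := ht
  exact ⟨r + r', by simp⟩

theorem sq_mul {s : ℝ[X]} (hs : IsSumOfSquaresPoly s) (p : ℝ[X]) :
    IsSumOfSquaresPoly (p ^ 2 * s) := by
  obtain ⟨r, rfl⟩ := hs
  refine ⟨r.map (p * ·), ?_⟩
  simp [Multiset.map_map, mul_pow, Multiset.sum_map_mul_left]

end IsSumOfSquaresPoly

theorem Continuous.nonneg_on_Icc_of_ne {f : ℝ → ℝ} (hf : Continuous f) {a b c : ℝ} (hab : a < b)
    (h : ∀ x ∈ Set.Icc a b, x ≠ c → 0 ≤ f x) : ∀ x ∈ Set.Icc a b, 0 ≤ f x := by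
  have hdense : Set.Icc a b ⊆ closure (Set.Ioo a b ∩ {c}ᶜ) := by
    rw [← closure_Ioo hab.ne]
    exact closure_minimal ((dense_compl_singleton c).open_subset_closure_inter isOpen_Ioo)
      isClosed_closure
  intro x hx
  exact closure_minimal (fun y hy => h y (Set.Ioo_subset_Icc_self hy.1) hy.2)
    (isClosed_le continuous_const hf) (hdense hx)

namespace Polynomial

theorem natDegree_le_of_natDegree_mul_le {R : Type*} [Semiring R] [NoZeroDivisors R]
    {r h : R[X]} {n : ℕ} (hr : r ≠ 0) (hrh : (r * h).natDegree ≤ r.natDegree + n) :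
    h.natDegree ≤ n := by
  rcases eq_or_ne h 0 with rfl | hh
  · simp
  · rw [natDegree_mul hr hh] at hrh
    omega

theorem natDegree_le_of_eq_mul {R : Type*} [Semiring R] {p r s : R[X]} {k n : ℕ}
    (hp : p = r * s) (hr : r.natDegree ≤ k) (hs : s.natDegree ≤ n) : p.natDegree ≤ n + k :=
  hp ▸ (natDegree_mul_le_of_le hr hs).trans_eq (add_comm k n)

theorem sq_X_sub_C_dvd_of_isRoot_derivative {R : Type*} [CommRing R] [IsDomain R]
    [CharZero R] {p : R[X]} {c : R} (hp : p.IsRoot c) (hp' : p.derivative.IsRoot c) :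
    (X - C c) ^ 2 ∣ p := by
  rcases eq_or_ne p 0 with rfl | hp0
  · exact dvd_zero _
  · exact (le_rootMultiplicity_iff hp0).1 ((one_lt_rootMultiplicity_iff_isRoot hp0).2 ⟨hp, hp'⟩)

theorem eval_nonneg_of_eval_mul_nonneg {a b c : ℝ} (hab : a < b) {r h : ℝ[X]}
    (hr : ∀ x ∈ Set.Icc a b, x ≠ c → 0 < r.eval x)
    (hrh : ∀ x ∈ Set.Icc a b, 0 ≤ (r * h).eval x) : ∀ x ∈ Set.Icc a b, 0 ≤ h.eval x :=
  h.continuous.nonneg_on_Icc_of_ne hab fun x hx hxc =>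
    nonneg_of_mul_nonneg_right (eval_mul (p := r) ▸ hrh x hx) (hr x hx hxc)

end Polynomial

def HasSOSCertificate (a b : ℝ) (N : ℕ) (q : ℝ[X]) : Prop :=
  ∃ s₀ s₁ s₂ s₃ : ℝ[X],
    IsSumOfSquaresPoly s₀ ∧ IsSumOfSquaresPoly s₁ ∧
    IsSumOfSquaresPoly s₂ ∧ IsSumOfSquaresPoly s₃ ∧
    q = s₀ + s₁ * (X - C a) + s₂ * (C b - X) + s₃ * (X - C a) * (C b - X) ∧
    s₀.natDegree ≤ N ∧
    (s₁ * (X - C a)).natDegree ≤ N ∧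
    (s₂ * (C b - X)).natDegree ≤ N ∧
    (s₃ * (X - C a) * (C b - X)).natDegree ≤ N

theorem hasSOSCertificate_C (a b : ℝ) (N : ℕ) {m : ℝ} (hm : 0 ≤ m) :
    HasSOSCertificate a b N (C m) :=
  ⟨C m, 0, 0, 0, isSumOfSquaresPoly_C hm, isSumOfSquaresPoly_zero, isSumOfSquaresPoly_zero,
    isSumOfSquaresPoly_zero, by ring, by simp, by simp, by simp, by simp⟩

namespace HasSOSCertificate

variable {a b : ℝ} {N n : ℕ} {q p : ℝ[X]}

theorem mono {M : ℕ} (h : HasSOSCertificate a b N q) (hNM : N ≤ M) :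
    HasSOSCertificate a b M q := by
  obtain ⟨s₀, s₁, s₂, s₃, h₀, h₁, h₂, h₃, hq, d₀, d₁, d₂, d₃⟩ := h
  exact ⟨s₀, s₁, s₂, s₃, h₀, h₁, h₂, h₃, hq, d₀.trans hNM, d₁.trans hNM, d₂.trans hNM,
    d₃.trans hNM⟩

theorem add_C (h : HasSOSCertificate a b N q) {m : ℝ} (hm : 0 ≤ m) :
    HasSOSCertificate a b N (q + C m) := by
  obtain ⟨s₀, s₁, s₂, s₃, h₀, h₁, h₂, h₃, rfl, d₀, d₁, d₂, d₃⟩ := h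
  exact ⟨s₀ + C m, s₁, s₂, s₃, h₀.add (isSumOfSquaresPoly_C hm), h₁, h₂, h₃, by ring,
    natDegree_add_le_of_degree_le d₀ (by simp), d₁, d₂, d₃⟩

theorem sq_mul (h : HasSOSCertificate a b N q) {r : ℝ[X]} {k : ℕ} (hr : r.natDegree ≤ k) :
    HasSOSCertificate a b (N + 2 * k) (r ^ 2 * q) := by
  obtain ⟨s₀, s₁, s₂, s₃, h₀, h₁, h₂, h₃, rfl, d₀, d₁, d₂, d₃⟩ := h
  have hr2 := natDegree_pow_le_of_le 2 hr
  exact ⟨r ^ 2 * s₀, r ^ 2 * s₁, r ^ 2 * s₂, r ^ 2 * s₃, h₀.sq_mul r, h₁.sq_mul r, h₂.sq_mul r,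
    h₃.sq_mul r, by ring, natDegree_le_of_eq_mul rfl hr2 d₀,
    natDegree_le_of_eq_mul (by ring) hr2 d₁, natDegree_le_of_eq_mul (by ring) hr2 d₂,
    natDegree_le_of_eq_mul (by ring) hr2 d₃⟩

theorem X_sub_C_mul (h : HasSOSCertificate a b N q) :
    HasSOSCertificate a b (N + 1) ((X - C a) * q) := by
  obtain ⟨s₀, s₁, s₂, s₃, h₀, h₁, h₂, h₃, rfl, d₀, d₁, d₂, d₃⟩ := h
  have hX := natDegree_X_sub_C_le a
  exact ⟨(X - C a) ^ 2 * s₁, s₀, (X - C a) ^ 2 * s₃, s₂, h₁.sq_mul _, h₀,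
    h₃.sq_mul _, h₂, by ring, natDegree_le_of_eq_mul (by ring) hX d₁,
    natDegree_le_of_eq_mul (by ring) hX d₀, natDegree_le_of_eq_mul (by ring) hX d₃,
    natDegree_le_of_eq_mul (by ring) hX d₂⟩

theorem C_sub_X_mul (h : HasSOSCertificate a b N q) :
    HasSOSCertificate a b (N + 1) ((C b - X) * q) := by
  obtain ⟨s₀, s₁, s₂, s₃, h₀, h₁, h₂, h₃, rfl, d₀, d₁, d₂, d₃⟩ := h
  have hX : (C b - X).natDegree ≤ 1 := by compute_degree
  exact ⟨(C b - X) ^ 2 * s₂, (C b - X) ^ 2 * s₃, s₀, s₁, h₂.sq_mul _,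
    h₃.sq_mul _, h₀, h₁, by ring, natDegree_le_of_eq_mul (by ring) hX d₂,
    natDegree_le_of_eq_mul (by ring) hX d₃, natDegree_le_of_eq_mul (by ring) hX d₀,
    natDegree_le_of_eq_mul (by ring) hX d₁⟩

theorem of_isRoot_left (hab : a < b)
    (ih : ∀ h : ℝ[X], h.natDegree ≤ n → (∀ x ∈ Set.Icc a b, 0 ≤ h.eval x) →
      HasSOSCertificate a b (2 * n) h)
    (hp : ∀ x ∈ Set.Icc a b, 0 ≤ p.eval x) (hdeg : p.natDegree ≤ n + 1) (hroot : p.IsRoot a) :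
    HasSOSCertificate a b (2 * n + 1) p := by
  obtain ⟨h, rfl⟩ := dvd_iff_isRoot.2 hroot
  have hdeg' : h.natDegree ≤ n :=
    natDegree_le_of_natDegree_mul_le (X_sub_C_ne_zero a) (by rwa [natDegree_X_sub_C, add_comm])
  have hh : ∀ x ∈ Set.Icc a b, 0 ≤ h.eval x :=
    eval_nonneg_of_eval_mul_nonneg hab (c := a)
      (fun x hx hxa => by simpa using lt_of_le_of_ne' hx.1 hxa) hp
  exact (ih h hdeg' hh).X_sub_C_mul

theorem of_isRoot_right (hab : a < b)
    (ih : ∀ h : ℝ[X], h.natDegree ≤ n → (∀ x ∈ Set.Icc a b, 0 ≤ h.eval x) →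
      HasSOSCertificate a b (2 * n) h)
    (hp : ∀ x ∈ Set.Icc a b, 0 ≤ p.eval x) (hdeg : p.natDegree ≤ n + 1) (hroot : p.IsRoot b) :
    HasSOSCertificate a b (2 * n + 1) p := by
  obtain ⟨h, rfl⟩ := dvd_iff_isRoot.2 hroot
  have hdeg' : (-h).natDegree ≤ n := by
    rw [natDegree_neg]
    exact natDegree_le_of_natDegree_mul_le (X_sub_C_ne_zero b)
      (by rwa [natDegree_X_sub_C, add_comm])
  have hflip : (X - C b) * h = (C b - X) * -h := by ring
  rw [hflip] at hp ⊢
  have hh : ∀ x ∈ Set.Icc a b, 0 ≤ (-h).eval x :=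
    eval_nonneg_of_eval_mul_nonneg hab (c := b)
      (fun x hx hxb => by simpa using lt_of_le_of_ne hx.2 hxb) hp
  exact (ih (-h) hdeg' hh).C_sub_X_mul

theorem of_isRoot_derivative (hab : a < b)
    (ih : ∀ h : ℝ[X], h.natDegree ≤ n → (∀ x ∈ Set.Icc a b, 0 ≤ h.eval x) →
      HasSOSCertificate a b (2 * n) h)
    (hp : ∀ x ∈ Set.Icc a b, 0 ≤ p.eval x) (hdeg : p.natDegree ≤ n + 2) {c : ℝ}
    (hroot : p.IsRoot c) (hroot' : p.derivative.IsRoot c) :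
    HasSOSCertificate a b (2 * n + 2) p := by
  obtain ⟨h, rfl⟩ := sq_X_sub_C_dvd_of_isRoot_derivative hroot hroot'
  have hdeg' : h.natDegree ≤ n :=
    natDegree_le_of_natDegree_mul_le (pow_ne_zero 2 (X_sub_C_ne_zero c))
      (by rwa [natDegree_pow, natDegree_X_sub_C, add_comm])
  have hh : ∀ x ∈ Set.Icc a b, 0 ≤ h.eval x :=
    eval_nonneg_of_eval_mul_nonneg hab (c := c)
      (fun x _ hxc => by simpa using sq_pos_of_ne_zero (sub_ne_zero.2 hxc)) hp
  simpa using (ih h hdeg' hh).sq_mul (natDegree_X_sub_C_le c)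

end HasSOSCertificate

theorem hasSOSCertificate_of_nonneg {a b : ℝ} (hab : a < b) (n : ℕ) (q : ℝ[X])
    (hdeg : q.natDegree ≤ n) (hpos : ∀ x ∈ Set.Icc a b, 0 ≤ q.eval x) :
    HasSOSCertificate a b (2 * n) q := by
  induction n generalizing q with
  | zero =>
    rw [eq_C_of_natDegree_le_zero hdeg] at hpos ⊢
    simpa using hasSOSCertificate_C a b 0 (by simpa using hpos a (Set.left_mem_Icc.2 hab.le))
  | succ n ih =>
    obtain ⟨x₀, hx₀, hmin⟩ :=
      isCompact_Icc.exists_isMinOn (Set.nonempty_Icc.2 hab.le) q.continuous.continuousOn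
    set m := q.eval x₀
    have hm : 0 ≤ m := hpos x₀ hx₀
    have hp : ∀ x ∈ Set.Icc a b, 0 ≤ (q - C m).eval x := fun x hx => by
      simpa using isMinOn_iff.1 hmin x hx
    have hpdeg : (q - C m).natDegree ≤ n + 1 := natDegree_sub_C.trans_le hdeg
    have hroot : (q - C m).IsRoot x₀ := by simp [m]
    suffices HasSOSCertificate a b (2 * (n + 1)) (q - C m) by
      simpa using this.add_C hm
    rcases hx₀.1.eq_or_lt with rfl | hax
    · exact (HasSOSCertificate.of_isRoot_left hab ih hp hpdeg hroot).mono (by omega)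
    rcases hx₀.2.eq_or_lt with rfl | hxb
    · exact (HasSOSCertificate.of_isRoot_right hab ih hp hpdeg hroot).mono (by omega)
    have hcrit : (q - C m).derivative.IsRoot x₀ := by
      simpa [Polynomial.deriv] using (hmin.isLocalMin (Icc_mem_nhds hax hxb)).deriv_eq_zero
    exact HasSOSCertificate.of_isRoot_derivative hab ih hp (by omega) hroot hcrit

/-- Corollary of Lukács' theorem: a degree-`d` polynomial nonnegative on `[a,b]`
has a degree-`2d` sum-of-squares certificate from the axioms `{x ≥ a, x ≤ b}`. -/
theorem lukacs_sos_certificate (q : Polynomial ℝ) (d : ℕ) (a b : ℝ) (hab : a < b)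
    (hdeg : q.natDegree ≤ d)
    (hpos : ∀ x ∈ Set.Icc a b, 0 ≤ q.eval x) :
    ∃ s₀ s₁ s₂ s₃ : Polynomial ℝ,
      IsSumOfSquaresPoly s₀ ∧ IsSumOfSquaresPoly s₁ ∧
      IsSumOfSquaresPoly s₂ ∧ IsSumOfSquaresPoly s₃ ∧
      q = s₀ + s₁ * (X - C a) + s₂ * (C b - X) + s₃ * (X - C a) * (C b - X) ∧
      s₀.natDegree ≤ 2 * d ∧
      (s₁ * (X - C a)).natDegree ≤ 2 * d ∧
      (s₂ * (C b - X)).natDegree ≤ 2 * d ∧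
      (s₃ * (X - C a) * (C b - X)).natDegree ≤ 2 * d :=
  hasSOSCertificate_of_nonneg hab d q hdeg hpos
end
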